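/- Let M = ([n], 𝓘) be a matroid with rank r, and let I* be the output of the greedy algorithm with positive weights w (processing elements in nonincreasing weight order with fixed tie-breaking, adding each element that preserves independence). Then |I*| = r and ∑_{i ∈ I*} w(i) = max over I ∈ 𝓘 of ∑_{i ∈ I} w(i). -/

import Mathlib

open Finset
open scoped Classical

variable {n : ℕ}

/-- The list of indices sorted in nonincreasing order of weight,
breaking ties in favor of lower indices. -/
noncomputable def sortedList (n : ℕ) (w : Fin n → ℝ) : List (Fin n) :=
  (List.finRange n).mergeSort (fun a b => decide (w b < w a ∨ (w a = w b ∧ a ≤ b)))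

/-- Greedy: process the list in order, adding an element whenever independence is kept. -/
noncomputable def greedyAux (Indep : Finset (Fin n) → Prop) :
    List (Fin n) → Finset (Fin n) → Finset (Fin n)
  | [], I => I
  | a :: l, I => greedyAux Indep l (if Indep (insert a I) then insert a I else I)

/-- The greedy algorithm on a matroid with weights `w`. -/
noncomputable def greedy (Indep : Finset (Fin n) → Prop) (w : Fin n → ℝ) : Finset (Fin n) :=
  greedyAux Indep (sortedList n w) ∅

/-- The matroid rank function. -/
noncomputable def rank (Indep : Finset (Fin n) → Prop) (S : Finset (Fin n)) : ℕ :=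
  (S.powerset.filter Indep).sup Finset.card

/-! The greedy set `G` is a maximal independent set, so by the exchange axiom every independent
set is at most as large as `G`; this gives the rank. The same argument applied to each prefix `p`
of the sorted list shows `#(I ∩ p) ≤ #(G ∩ p)` for every independent `I`, since `G ∩ p` contains
the greedy set of `p`. As the weights are nonnegative and nonincreasing along the list, Abel
summation turns these prefix inequalities into `w(I) ≤ w(G)`. -/

section Abel

variable {α : Type*}

theorem mul_sum_le_sum_mul_of_prefix_sum_nonneg (w x : α → ℝ) {l : List α}
    (hl : l.Pairwise fun a b => w b ≤ w a) (hx : ∀ p, p <+: l → 0 ≤ (p.map x).sum)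
    {m : ℝ} (hm : ∀ a ∈ l, m ≤ w a) :
    m * (l.map x).sum ≤ (l.map fun a => w a * x a).sum := by
  induction l using List.reverseRecOn generalizing m with
  | nil => simp
  | append_singleton l a ih =>
    rw [List.pairwise_append] at hl
    have hwa : ∀ b ∈ l, w a ≤ w b := fun b hb => hl.2.2 b hb a (List.mem_singleton_self a)
    have ih' := ih hl.1 (fun p hp => hx p (hp.trans (List.prefix_append l [a]))) hwa
    have hsum := hx _ (List.prefix_refl _)
    simp only [List.map_append, List.sum_append, List.map_singleton,
      List.sum_singleton] at hsum ⊢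
    calc m * ((l.map x).sum + x a)
        ≤ w a * ((l.map x).sum + x a) := mul_le_mul_of_nonneg_right (hm a (by simp)) hsum
      _ = w a * (l.map x).sum + w a * x a := mul_add _ _ _
      _ ≤ (l.map fun a => w a * x a).sum + w a * x a := by gcongr

theorem sum_le_sum_of_card_prefix_inter_le [DecidableEq α] (w : α → ℝ) {l : List α}
    (hnd : l.Nodup) (hl : l.Pairwise fun a b => w b ≤ w a) (hw : ∀ a ∈ l, 0 ≤ w a)
    {A B : Finset α} (hA : A ⊆ l.toFinset) (hB : B ⊆ l.toFinset)
    (h : ∀ p, p <+: l → #(p.toFinset ∩ B) ≤ #(p.toFinset ∩ A)) :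
    ∑ a ∈ B, w a ≤ ∑ a ∈ A, w a := by
  set x : α → ℝ := fun a => (if a ∈ A then 1 else 0) - (if a ∈ B then 1 else 0)
  have hx : ∀ p, p <+: l → 0 ≤ (p.map x).sum := by
    intro p hp
    rw [← List.sum_toFinset _ (hnd.sublist hp.sublist), sum_sub_distrib, sum_boole, sum_boole,
      filter_mem_eq_inter, filter_mem_eq_inter, sub_nonneg]
    exact_mod_cast h p hp
  have hwx : (l.map fun a => w a * x a).sum = ∑ a ∈ A, w a - ∑ a ∈ B, w a := by
    rw [← List.sum_toFinset _ hnd]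
    simp only [x, mul_sub, mul_ite, mul_one, mul_zero, sum_sub_distrib, sum_ite_mem,
      inter_eq_right.2 hA, inter_eq_right.2 hB]
  have := mul_sum_le_sum_mul_of_prefix_sum_nonneg w x hl hx hw
  rw [zero_mul, hwx] at this
  linarith

end Abel

theorem sortedList_perm (w : Fin n → ℝ) : (sortedList n w).Perm (List.finRange n) :=
  List.mergeSort_perm _ _

theorem sortedList_nodup (w : Fin n → ℝ) : (sortedList n w).Nodup :=
  (sortedList_perm w).nodup_iff.2 (List.nodup_finRange n)

theorem toFinset_sortedList (w : Fin n → ℝ) : (sortedList n w).toFinset = univ := by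
  ext a
  simp [(sortedList_perm w).mem_iff]

theorem pairwise_sortedList (w : Fin n → ℝ) :
    (sortedList n w).Pairwise fun a b => w b ≤ w a := by
  refine (List.pairwise_mergeSort ?_ ?_ _).imp ?_
  · intro a b c hab hbc
    simp only [decide_eq_true_eq] at hab hbc ⊢
    grind
  · intro a b
    simp only [Bool.or_eq_true, decide_eq_true_eq]
    grind
  · intro a b hab
    simp only [decide_eq_true_eq] at hab
    grind

section Greedy

variable {Indep : Finset (Fin n) → Prop}

theorem subset_greedyAux (l : List (Fin n)) (I : Finset (Fin n)) :
    I ⊆ greedyAux Indep l I := by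
  induction l generalizing I with
  | nil => rfl
  | cons a l ih =>
    rw [greedyAux]
    split_ifs
    · exact (subset_insert a I).trans (ih _)
    · exact ih I

theorem greedyAux_subset (l : List (Fin n)) (I : Finset (Fin n)) :
    greedyAux Indep l I ⊆ I ∪ l.toFinset := by
  induction l generalizing I with
  | nil => simp [greedyAux]
  | cons a l ih =>
    rw [greedyAux]
    refine (ih _).trans ?_
    rw [List.toFinset_cons, union_insert]
    split_ifs
    · rw [insert_union]
    · exact subset_insert _ _

theorem indep_greedyAux (l : List (Fin n)) {I : Finset (Fin n)} (hI : Indep I) :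
    Indep (greedyAux Indep l I) := by
  induction l generalizing I with
  | nil => exact hI
  | cons a l ih =>
    rw [greedyAux]
    split_ifs with h
    exacts [ih h, ih hI]

theorem greedyAux_append (p s : List (Fin n)) (I : Finset (Fin n)) :
    greedyAux Indep (p ++ s) I = greedyAux Indep s (greedyAux Indep p I) := by
  induction p generalizing I with
  | nil => rfl
  | cons a p ih => exact ih _

theorem not_indep_insert_greedyAux (hDown : ∀ A B : Finset (Fin n), A ⊆ B → Indep B → Indep A)
    {l : List (Fin n)} (I : Finset (Fin n)) {a : Fin n} (ha : a ∈ l)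
    (haG : a ∉ greedyAux Indep l I) : ¬ Indep (insert a (greedyAux Indep l I)) := by
  induction l generalizing I with
  | nil => simp at ha
  | cons b l ih =>
    rw [greedyAux] at haG ⊢
    rcases List.mem_cons.1 ha with rfl | ha
    · split_ifs at haG ⊢ with h
      · exact absurd (subset_greedyAux l _ (mem_insert_self a I)) haG
      · exact fun hins => h (hDown _ _ (insert_subset_insert a (subset_greedyAux l I)) hins)
    · exact ih _ ha haG

theorem card_le_card_greedyAux (hDown : ∀ A B : Finset (Fin n), A ⊆ B → Indep B → Indep A)
    (hExch : ∀ A B : Finset (Fin n), Indep A → Indep B → A.card < B.card →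
      ∃ x ∈ B, x ∉ A ∧ Indep (insert x A))
    (l : List (Fin n)) {I J : Finset (Fin n)} (hI : Indep I) (hJ : Indep J)
    (hJl : J ⊆ l.toFinset) : #J ≤ #(greedyAux Indep l I) := by
  by_contra! hlt
  obtain ⟨x, hxJ, hxG, hx⟩ := hExch _ J (indep_greedyAux l hI) hJ hlt
  exact not_indep_insert_greedyAux hDown I (List.mem_toFinset.1 (hJl hxJ)) hxG hx

theorem card_inter_le_card_inter_greedyAux_append (hEmpty : Indep ∅)
    (hDown : ∀ A B : Finset (Fin n), A ⊆ B → Indep B → Indep A)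
    (hExch : ∀ A B : Finset (Fin n), Indep A → Indep B → A.card < B.card →
      ∃ x ∈ B, x ∉ A ∧ Indep (insert x A))
    (p s : List (Fin n)) {I : Finset (Fin n)} (hI : Indep I) :
    #(p.toFinset ∩ I) ≤ #(p.toFinset ∩ greedyAux Indep (p ++ s) ∅) := by
  have hsub : greedyAux Indep p ∅ ⊆ p.toFinset ∩ greedyAux Indep (p ++ s) ∅ := by
    refine subset_inter (by simpa using greedyAux_subset p ∅) ?_
    rw [greedyAux_append]
    exact subset_greedyAux s _
  calc #(p.toFinset ∩ I)
      ≤ #(greedyAux Indep p ∅) :=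
        card_le_card_greedyAux hDown hExch p hEmpty (hDown _ _ inter_subset_right hI)
          inter_subset_left
    _ ≤ _ := card_le_card hsub

end Greedy

/-- Greedy is optimal on matroids (Edmonds 1971): the greedy set is an independent set of
size equal to the matroid rank, and of maximum total weight among independent sets. -/
theorem stmt_13 {n : ℕ} (Indep : Finset (Fin n) → Prop)
    (hEmpty : Indep ∅)
    (hDown : ∀ A B : Finset (Fin n), A ⊆ B → Indep B → Indep A)
    (hExch : ∀ A B : Finset (Fin n), Indep A → Indep B → A.card < B.card →
      ∃ x ∈ B, x ∉ A ∧ Indep (insert x A))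
    (w : Fin n → ℝ) (hw : ∀ j, 0 < w j) :
    Indep (greedy Indep w) ∧
    (greedy Indep w).card = rank Indep Finset.univ ∧
    ∀ I : Finset (Fin n), Indep I → ∑ j ∈ I, w j ≤ ∑ j ∈ greedy Indep w, w j := by
  have hG : Indep (greedy Indep w) := indep_greedyAux _ hEmpty
  refine ⟨hG, le_antisymm (le_sup (by simpa using hG)) (Finset.sup_le fun I hI => ?_),
    fun I hI => ?_⟩
  · exact card_le_card_greedyAux hDown hExch _ hEmpty (mem_filter.1 hI).2
      (by simp [toFinset_sortedList])
  · refine sum_le_sum_of_card_prefix_inter_le w (sortedList_nodup w) (pairwise_sortedList w)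
      (fun a _ => (hw a).le) (by simp [toFinset_sortedList]) (by simp [toFinset_sortedList]) ?_
    rintro p ⟨s, hs⟩
    rw [greedy, ← hs]
    exact card_inter_le_card_inter_greedyAux_append hEmpty hDown hExch p s hI
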